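/- With F₁^t(QW, Q̃W̃) := D(W‖P|Q) + D^t(QW, Q̃W̃) and F₂(QW, R) := D(W‖P|Q) − I(Q,W) + R, the constrained minimum over (Q,W) with E_Q[f(X)] ≤ α of max{F₁^t, F₂} further minimized over all reference distributions Q̃W̃ equals min over constrained (Q,W) of { D(W‖P|Q) + |R − I(Q,W)|^+ }. That is, adding the penalty D^t(QW, Q̃W̃) and minimizing over Q̃W̃ recovers the correct-decoding exponent. -/

import Mathlib

open scoped BigOperators
open Filter Topology

/-- A joint probability distribution on `X × Y`, given by a nonnegative
pmf `p` summing to one. -/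
structure JointDist (X Y : Type) [Fintype X] [Fintype Y] where
  p : X → Y → ℝ
  nonneg : ∀ x y, 0 ≤ p x y
  sum_one : ∑ x : X, ∑ y : Y, p x y = 1

namespace JointDist

variable {X Y : Type} [Fintype X] [Fintype Y]

/-- `X`-marginal `Q`. -/
noncomputable def Qm (μ : JointDist X Y) (x : X) : ℝ := ∑ y : Y, μ.p x y

/-- `Y`-marginal `T`. -/
noncomputable def Tm (μ : JointDist X Y) (y : Y) : ℝ := ∑ x : X, μ.p x y

/-- Conditional distribution `W(y|x)`. -/
noncomputable def Wc (μ : JointDist X Y) (x : X) (y : Y) : ℝ :=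
  if μ.Qm x = 0 then 0 else μ.p x y / μ.Qm x

/-- Conditional distribution `V(x|y)`. -/
noncomputable def Vc (μ : JointDist X Y) (y : Y) (x : X) : ℝ :=
  if μ.Tm y = 0 then 0 else μ.p x y / μ.Tm y

end JointDist

/-- Kullback–Leibler divergence `D(p‖q)` between finite nonnegative vectors,
valued in `EReal`, with the conventions `0 log 0 = 0` and `D = ⊤` if
absolute continuity fails. -/
noncomputable def relEnt {Z : Type} [Fintype Z] (p q : Z → ℝ) : EReal :=
  if ∀ z, q z = 0 → p z = 0 then
    (((∑ z : Z, if p z = 0 then 0 else p z * Real.log (p z / q z)) : ℝ) : EReal)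
  else ⊤

/-- Conditional KL divergence `D(w‖w'|q) = ∑_a q(a) D(w(·|a)‖w'(·|a))`,
valued in `EReal` with the usual conventions. -/
noncomputable def condRelEnt {A B : Type} [Fintype A] [Fintype B]
    (q : A → ℝ) (w w' : A → B → ℝ) : EReal :=
  if ∀ a b, q a ≠ 0 → w' a b = 0 → w a b = 0 then
    (((∑ a : A, ∑ b : B, if q a * w a b = 0 then 0
        else q a * w a b * Real.log (w a b / w' a b)) : ℝ) : EReal)
  else ⊤

variable {X Y : Type}

/-- The weighted divergence combination
`D^t(QW, Q'W') = t₁ D(Q‖Q') + t₂ D(W‖W'|Q) + t₃ D(T‖T') + t₄ D(V‖V'|T)`. -/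
noncomputable def Dt [Fintype X] [Fintype Y] (t : Fin 4 → ℝ)
    (μ ν : JointDist X Y) : EReal :=
  (t 0 : EReal) * relEnt μ.Qm ν.Qm + (t 1 : EReal) * condRelEnt μ.Qm μ.Wc ν.Wc +
  (t 2 : EReal) * relEnt μ.Tm ν.Tm + (t 3 : EReal) * condRelEnt μ.Tm μ.Vc ν.Vc

/-- `D(W‖P|Q)` for the channel `P`. -/
noncomputable def condDivP [Fintype X] [Fintype Y] (P : X → Y → ℝ)
    (μ : JointDist X Y) : EReal :=
  condRelEnt μ.Qm μ.Wc P

/-- Mutual information `I(Q,W)` of the joint law `QW`. -/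
noncomputable def mutInfo [Fintype X] [Fintype Y] (μ : JointDist X Y) : ℝ :=
  ∑ x : X, ∑ y : Y, if μ.p x y = 0 then 0
    else μ.p x y * Real.log (μ.p x y / (μ.Qm x * μ.Tm y))

/-- Expected cost `E_Q[f(X)]`. -/
noncomputable def expCost [Fintype X] [Fintype Y] (f : X → ℝ)
    (μ : JointDist X Y) : ℝ :=
  ∑ x : X, μ.Qm x * f x

/-- `F₁^t(QW, Q̃W̃) = D(W‖P|Q) + D^t(QW, Q̃W̃)`. -/
noncomputable def F1 [Fintype X] [Fintype Y] (P : X → Y → ℝ) (t : Fin 4 → ℝ)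
    (μ ν : JointDist X Y) : EReal :=
  condDivP P μ + Dt t μ ν

/-- `F₂(QW, R) = D(W‖P|Q) − I(Q,W) + R`. -/
noncomputable def F2 [Fintype X] [Fintype Y] (P : X → Y → ℝ) (R : ℝ)
    (μ : JointDist X Y) : EReal :=
  condDivP P μ - ((mutInfo μ : ℝ) : EReal) + ((R : ℝ) : EReal)

/-- `F^t(QW, Q̃W̃, R) = max{F₁^t(QW, Q̃W̃), F₂(QW, R)}`. -/
noncomputable def Fr [Fintype X] [Fintype Y] (P : X → Y → ℝ) (t : Fin 4 → ℝ)
    (R : ℝ) (μ ν : JointDist X Y) : EReal :=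
  max (F1 P t μ ν) (F2 P R μ)

/-- `E_c^t(Q̃W̃, R, α)`: the constrained minimum of `F^t(·, Q̃W̃, R)`. -/
noncomputable def Ec [Fintype X] [Fintype Y] (P : X → Y → ℝ) (t : Fin 4 → ℝ)
    (f : X → ℝ) (R α : ℝ) (ν : JointDist X Y) : EReal :=
  sInf ((fun μ => Fr P t R μ ν) '' {μ : JointDist X Y | expCost f μ ≤ α})

/-- `F^t(ρ, η, QW, Q̃W̃) = D(W‖P|Q) − ρ I(Q,W) + η E_Q[f] + (1−ρ) D^t(QW, Q̃W̃)`. -/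
noncomputable def Fslope [Fintype X] [Fintype Y] (P : X → Y → ℝ) (t : Fin 4 → ℝ)
    (f : X → ℝ) (ρ η : ℝ) (μ ν : JointDist X Y) : EReal :=
  condDivP P μ - ((ρ * mutInfo μ : ℝ) : EReal) + ((η * expCost f μ : ℝ) : EReal)
    + ((1 - ρ : ℝ) : EReal) * Dt t μ ν

/-- `E₀^t(ρ, η, Q̃W̃)`: the unconstrained minimum of `F^t(ρ, η, ·, Q̃W̃)`. -/
noncomputable def E0 [Fintype X] [Fintype Y] (P : X → Y → ℝ) (t : Fin 4 → ℝ)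
    (f : X → ℝ) (ρ η : ℝ) (ν : JointDist X Y) : EReal :=
  sInf (Set.range (fun μ : JointDist X Y => Fslope P t f ρ η μ ν))

/-!
Taking the reference distribution `Q̃W̃` equal to the minimizer `QW` itself kills the penalty,
since `D^t(QW, QW) = 0`, and then `max{F₁^t, F₂} = D(W‖P|Q) + |R − I(Q,W)|⁺`. Conversely
`D^t ≥ 0` by Gibbs' inequality, so for every reference distribution
`max{F₁^t, F₂} ≥ D(W‖P|Q) + max{0, R − I(Q,W)}` pointwise.
-/

open Finset

section Divergence

variable {Z : Type} [Fintype Z]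

/-- Pointwise Gibbs inequality, from `log x ≤ x - 1` at `x = q / p`. -/
lemma sub_le_klTerm {p q : ℝ} (hp : 0 ≤ p) (hq : 0 ≤ q) (hac : q = 0 → p = 0) :
    p - q ≤ if p = 0 then 0 else p * Real.log (p / q) := by
  split_ifs with hp0
  · linarith
  have hp' : 0 < p := lt_of_le_of_ne hp (Ne.symm hp0)
  have hq' : 0 < q := lt_of_le_of_ne hq fun h => hp0 (hac h.symm)
  have hlog : Real.log (q / p) ≤ q / p - 1 := Real.log_le_sub_one_of_pos (by positivity)
  rw [← inv_div, Real.log_inv]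
  have hlin : p * (q / p - 1) = q - p := by field_simp
  nlinarith [mul_le_mul_of_nonneg_left hlog hp'.le]

lemma klSum_nonneg (p q : Z → ℝ) (hp : ∀ z, 0 ≤ p z) (hq : ∀ z, 0 ≤ q z)
    (hac : ∀ z, q z = 0 → p z = 0) (hsum : ∑ z, q z ≤ ∑ z, p z) :
    0 ≤ ∑ z, if p z = 0 then 0 else p z * Real.log (p z / q z) :=
  calc (0 : ℝ) ≤ ∑ z, (p z - q z) := by rw [sum_sub_distrib]; linarith
    _ ≤ _ := sum_le_sum fun z _ => sub_le_klTerm (hp z) (hq z) (hac z)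

lemma relEnt_nonneg (p q : Z → ℝ) (hp : ∀ z, 0 ≤ p z) (hq : ∀ z, 0 ≤ q z)
    (hsum : ∑ z, q z ≤ ∑ z, p z) : 0 ≤ relEnt p q := by
  unfold relEnt
  split_ifs with hac
  · exact EReal.coe_nonneg.mpr (klSum_nonneg p q hp hq hac hsum)
  · exact le_top

/-- The conditional divergence is the divergence of the joint weights `q a * w a b`. -/
lemma condRelEnt_nonneg {A B : Type} [Fintype A] [Fintype B] (q : A → ℝ) (w w' : A → B → ℝ)
    (hq : ∀ a, 0 ≤ q a) (hw : ∀ a b, 0 ≤ w a b) (hw' : ∀ a b, 0 ≤ w' a b)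
    (hsum : ∑ a, ∑ b, q a * w' a b ≤ ∑ a, ∑ b, q a * w a b) :
    0 ≤ condRelEnt q w w' := by
  unfold condRelEnt
  split_ifs with hac
  swap
  · exact le_top
  have hjoint := klSum_nonneg (Z := A × B) (fun z => q z.1 * w z.1 z.2)
    (fun z => q z.1 * w' z.1 z.2) (fun z => mul_nonneg (hq _) (hw _ _))
    (fun z => mul_nonneg (hq _) (hw' _ _))
    (by
      rintro ⟨a, b⟩ hz
      by_cases hqa : q a = 0
      · simp [hqa]
      · simp [hac a b hqa ((mul_eq_zero.mp hz).resolve_left hqa)])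
    (by simpa only [Fintype.sum_prod_type] using hsum)
  rw [Fintype.sum_prod_type] at hjoint
  refine EReal.coe_nonneg.mpr (hjoint.trans_eq (sum_congr rfl fun a _ => sum_congr rfl fun b _ => ?_))
  split_ifs with hz
  · rfl
  · rw [mul_div_mul_left _ _ (left_ne_zero_of_mul hz)]

lemma relEnt_self (p : Z → ℝ) : relEnt p p = 0 := by
  rw [relEnt, if_pos fun _ h => h, sum_eq_zero fun z _ => ?_, EReal.coe_zero]
  split_ifs with hz
  · rfl
  · rw [div_self hz, Real.log_one, mul_zero]

lemma condRelEnt_self {A B : Type} [Fintype A] [Fintype B] (q : A → ℝ) (w : A → B → ℝ) :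
    condRelEnt q w w = 0 := by
  rw [condRelEnt, if_pos fun _ _ _ h => h,
    sum_eq_zero fun a _ => sum_eq_zero fun b _ => ?_, EReal.coe_zero]
  split_ifs with hz
  · rfl
  · rw [div_self (right_ne_zero_of_mul hz), Real.log_one, mul_zero]

end Divergence

namespace JointDist

variable {X Y : Type} [Fintype X] [Fintype Y] (μ ν : JointDist X Y)

/-- The same law read on `Y × X`; its `Qm`, `Wc` are the `Tm`, `Vc` of `μ` by definition. -/
def swap : JointDist Y X where
  p y x := μ.p x y
  nonneg y x := μ.nonneg x y
  sum_one := by rw [sum_comm]; exact μ.sum_one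

lemma sum_Qm : ∑ x, μ.Qm x = 1 := μ.sum_one

lemma Qm_nonneg (x : X) : 0 ≤ μ.Qm x := sum_nonneg fun y _ => μ.nonneg x y

lemma Wc_nonneg (x : X) (y : Y) : 0 ≤ μ.Wc x y := by
  unfold Wc
  split_ifs
  · rfl
  · exact div_nonneg (μ.nonneg x y) (μ.Qm_nonneg x)

lemma Qm_mul_Wc (x : X) (y : Y) : μ.Qm x * μ.Wc x y = μ.p x y := by
  unfold Wc
  split_ifs with h
  · rw [h, zero_mul, ((sum_eq_zero_iff_of_nonneg fun y _ => μ.nonneg x y).mp h y (mem_univ y))]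
  · field_simp

lemma sum_Wc_le_one (x : X) : ∑ y, μ.Wc x y ≤ 1 := by
  unfold Wc
  split_ifs with h
  · simp
  · rw [← sum_div]
    exact (div_self h).le

lemma sum_Qm_mul_Wc_le :
    ∑ x, ∑ y, μ.Qm x * ν.Wc x y ≤ ∑ x, ∑ y, μ.Qm x * μ.Wc x y :=
  calc ∑ x, ∑ y, μ.Qm x * ν.Wc x y = ∑ x, μ.Qm x * ∑ y, ν.Wc x y := by simp only [mul_sum]
    _ ≤ ∑ x, μ.Qm x * 1 :=
      sum_le_sum fun x _ => mul_le_mul_of_nonneg_left (ν.sum_Wc_le_one x) (μ.Qm_nonneg x)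
    _ = ∑ x, ∑ y, μ.Qm x * μ.Wc x y := by simp only [mul_one, Qm_mul_Wc, sum_Qm, μ.sum_one]

lemma relEnt_Qm_nonneg : 0 ≤ relEnt μ.Qm ν.Qm :=
  relEnt_nonneg _ _ μ.Qm_nonneg ν.Qm_nonneg (by rw [μ.sum_Qm, ν.sum_Qm])

lemma condRelEnt_Wc_nonneg : 0 ≤ condRelEnt μ.Qm μ.Wc ν.Wc :=
  condRelEnt_nonneg _ _ _ μ.Qm_nonneg μ.Wc_nonneg ν.Wc_nonneg (sum_Qm_mul_Wc_le μ ν)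

end JointDist

section Exponent

variable {X Y : Type} [Fintype X] [Fintype Y]

lemma Dt_nonneg {t : Fin 4 → ℝ} (ht : ∀ i, 0 ≤ t i) (μ ν : JointDist X Y) : 0 ≤ Dt t μ ν := by
  have c : ∀ i, (0 : EReal) ≤ t i := fun i => EReal.coe_nonneg.mpr (ht i)
  unfold Dt
  have hQ := mul_nonneg (c 0) (μ.relEnt_Qm_nonneg ν)
  have hW := mul_nonneg (c 1) (μ.condRelEnt_Wc_nonneg ν)
  have hT := mul_nonneg (c 2) (μ.swap.relEnt_Qm_nonneg ν.swap)
  have hV := mul_nonneg (c 3) (μ.swap.condRelEnt_Wc_nonneg ν.swap)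
  exact add_nonneg (add_nonneg (add_nonneg hQ hW) hT) hV

lemma Dt_self (t : Fin 4 → ℝ) (μ : JointDist X Y) : Dt t μ μ = 0 := by
  simp [Dt, relEnt_self, condRelEnt_self]

lemma Fr_eq (P : X → Y → ℝ) (t : Fin 4 → ℝ) (R : ℝ) (μ ν : JointDist X Y) :
    Fr P t R μ ν = condDivP P μ + max (Dt t μ ν) ((R - mutInfo μ : ℝ) : EReal) := by
  have hF2 : F2 P R μ = condDivP P μ + ((R - mutInfo μ : ℝ) : EReal) := by
    rw [F2, sub_eq_add_neg, add_assoc, ← EReal.coe_neg, ← EReal.coe_add, neg_add_eq_sub]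
  rw [Fr, F1, hF2, max_add_add_left]

lemma Fr_self (P : X → Y → ℝ) (t : Fin 4 → ℝ) (R : ℝ) (μ : JointDist X Y) :
    Fr P t R μ μ = condDivP P μ + ((max 0 (R - mutInfo μ) : ℝ) : EReal) := by
  rw [Fr_eq, Dt_self, EReal.coe_strictMono.monotone.map_max, EReal.coe_zero]

lemma le_Fr (P : X → Y → ℝ) {t : Fin 4 → ℝ} (ht : ∀ i, 0 ≤ t i) (R : ℝ) (μ ν : JointDist X Y) :
    condDivP P μ + ((max 0 (R - mutInfo μ) : ℝ) : EReal) ≤ Fr P t R μ ν := by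
  rw [← Fr_self P t R μ, Fr_eq, Fr_eq, Dt_self]
  gcongr
  exact Dt_nonneg ht μ ν

end Exponent

theorem stmt4_general {X Y : Type} [Fintype X] [Fintype Y]
    (P : X → Y → ℝ)
    (t : Fin 4 → ℝ) (ht : ∀ i, 0 ≤ t i)
    (f : X → ℝ) (R α : ℝ) :
    sInf (Set.range fun ν : JointDist X Y => Ec P t f R α ν)
      = sInf ((fun μ => condDivP P μ + ((max 0 (R - mutInfo μ) : ℝ) : EReal)) ''
          {μ : JointDist X Y | expCost f μ ≤ α}) := by
  apply le_antisymm
  · refine le_sInf ?_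
    rintro _ ⟨μ, hμ, rfl⟩
    calc sInf (Set.range fun ν : JointDist X Y => Ec P t f R α ν)
        ≤ Ec P t f R α μ := sInf_le ⟨μ, rfl⟩
      _ ≤ Fr P t R μ μ := sInf_le ⟨μ, hμ, rfl⟩
      _ = _ := Fr_self P t R μ
  · refine le_sInf ?_
    rintro _ ⟨ν, rfl⟩
    refine le_sInf ?_
    rintro _ ⟨μ, hμ, rfl⟩
    exact (sInf_le (Set.mem_image_of_mem _ hμ)).trans (le_Fr P ht R μ ν)

/-- Minimizing `E_c^t(Q̃W̃, R, α)` over all reference distributions `Q̃W̃`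
recovers the correct-decoding exponent
`min { D(W‖P|Q) + |R − I(Q,W)|⁺ : E_Q[f] ≤ α }`. -/
theorem stmt4 {X Y : Type} [Fintype X] [Fintype Y]
    (P : X → Y → ℝ) (hP : ∀ x y, 0 ≤ P x y) (hPsum : ∀ x, ∑ y : Y, P x y = 1)
    (t : Fin 4 → ℝ) (ht : ∀ i, 0 ≤ t i)
    (f : X → ℝ) (R α : ℝ) (hR : 0 ≤ R) (hα : ∃ x, f x ≤ α) :
    sInf (Set.range fun ν : JointDist X Y => Ec P t f R α ν)
      = sInf ((fun μ => condDivP P μ + ((max 0 (R - mutInfo μ) : ℝ) : EReal)) ''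
          {μ : JointDist X Y | expCost f μ ≤ α}) :=
  stmt4_general P t ht f R α
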